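/- arXiv:2001.04598 — 2 statements merged into one kernel-verified Lean document; each statement's English description precedes it below -/
import Mathlib

section
/- Let $(\delta, T)$ be a sequential hypothesis test such that $P_0(T<\infty) = P_1(T<\infty) = 1$. Then for any event $E \in \mathcal{F}_T$ and any $\gamma > 0$, $P_0(E) - \gamma P_1(E) \le P_0(S_T \ge \log \gamma)$, where $S_T = \sum_{k=1}^T \log(p_0(X_k)/p_1(X_k))$. -/
/-!
On `{T = n}` the event `E` is determined by the first `n` observations, whose laws under `P₀`
and `P₁` have the densities `∏ p₀(xᵢ)` and `∏ p₁(xᵢ)`. Where `Sₙ < log γ` the first density is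
at most `γ` times the second, so
`P₀(E ∩ {T = n}) ≤ γ P₁(E ∩ {T = n}) + P₀(E ∩ {T = n} ∩ {S_T ≥ log γ})`,
and summing over `n` gives the claim because `T < ∞` holds `P₀`-almost surely.

The densities `p₀, p₁` may be non-measurable, so `{S_T ≥ log γ}` is only measured by outer
measure. The pointwise density comparison is therefore made against measurable minorants with the
same indefinite integrals, and the outer measure is moved to the first `n` coordinates through the
splitting of the sequence space into the first `n` coordinates and the rest, which are independent.
-/

open MeasureTheory ProbabilityTheory Real

noncomputable section

/-- Sample space: infinite sequences of real observations. -/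
abbrev SeqSp : Type := ℕ → ℝ

/-- Log-likelihood ratio partial sum `S_n`. -/
def llrSum (p0 p1 : ℝ → ℝ) (n : ℕ) (ω : SeqSp) : ℝ :=
  ∑ k ∈ Finset.range n, Real.log (p0 (ω k) / p1 (ω k))

/-- The natural filtration generated by the first `n` coordinates. -/
def natFilt (n : ℕ) : MeasurableSpace SeqSp :=
  ⨆ k ∈ Finset.range n, MeasurableSpace.comap (fun ω : SeqSp => ω k) inferInstance

/-- `T` is a stopping time for the natural filtration. -/
def IsStopTime (T : SeqSp → ℕ∞) : Prop :=
  ∀ n : ℕ, MeasurableSet[natFilt n] {ω | T ω ≤ (n : ℕ∞)}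

/-- `E` belongs to the stopped σ-algebra `𝓕_T`. -/
def InStoppedSigma (T : SeqSp → ℕ∞) (E : Set SeqSp) : Prop :=
  ∀ n : ℕ, MeasurableSet[natFilt n] (E ∩ {ω | T ω ≤ (n : ℕ∞)})

/-- The stopped log-likelihood ratio `S_T`. -/
def stoppedLLR (p0 p1 : ℝ → ℝ) (T : SeqSp → ℕ∞) (ω : SeqSp) : ℝ :=
  llrSum p0 p1 (T ω).toNat ω

/-- The coordinates are i.i.d. with common law `P` under `μ`. -/
def IsIIDwithLaw (μ : Measure SeqSp) (P : Measure ℝ) : Prop :=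
  iIndepFun (fun k (ω : SeqSp) => ω k) μ ∧
    ∀ k : ℕ, μ.map (fun ω : SeqSp => ω k) = P

/-- The SPRT stopping time with thresholds `(α, β)`. -/
def sprtTime (p0 p1 : ℝ → ℝ) (α β : ℝ) (ω : SeqSp) : ℕ∞ :=
  ⨅ (k : ℕ) (_ : 1 ≤ k ∧ llrSum p0 p1 k ω ∉ Set.Icc (-α) β), (k : ℕ∞)

/-- Standard Gaussian CDF `Φ`. -/
def stdGaussCDF (a : ℝ) : ℝ := (gaussianReal 0 1 (Set.Iic a)).toReal

open scoped ENNReal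

namespace MeasureTheory

theorem lintegral_prod_mul_of_ne_top {α β : Type*} [MeasurableSpace α] [MeasurableSpace β]
    {μ : Measure α} {ν : Measure β} [SFinite μ] [SFinite ν] {f : α → ℝ≥0∞} {g : β → ℝ≥0∞}
    (hf : ∀ x, f x ≠ ∞) (hg : ∫⁻ y, g y ∂ν ≠ ∞) :
    ∫⁻ z, f z.1 * g z.2 ∂μ.prod ν = (∫⁻ x, f x ∂μ) * ∫⁻ y, g y ∂ν := by
  refine le_antisymm ?_ ?_
  · calc ∫⁻ z, f z.1 * g z.2 ∂μ.prod ν ≤ ∫⁻ x, ∫⁻ y, f x * g y ∂ν ∂μ := lintegral_prod_le _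
      _ = ∫⁻ x, f x * ∫⁻ y, g y ∂ν ∂μ := by
          congr with x; exact lintegral_const_mul' _ _ (hf x)
      _ = (∫⁻ x, f x ∂μ) * ∫⁻ y, g y ∂ν := lintegral_mul_const' _ _ hg
  · -- measurable minorants with the same integrals reduce this to the measurable case
    obtain ⟨f', hf'm, hf'f, hf'⟩ := exists_measurable_le_forall_setLIntegral_eq μ f
    obtain ⟨g', hg'm, hg'g, hg'⟩ := exists_measurable_le_forall_setLIntegral_eq ν g
    rw [← setLIntegral_univ, hf' Set.univ, ← setLIntegral_univ (f := g), hg' Set.univ,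
      setLIntegral_univ, setLIntegral_univ,
      ← lintegral_prod_mul hf'm.aemeasurable hg'm.aemeasurable]
    exact lintegral_mono fun z => mul_le_mul' (hf'f _) (hg'g _)

theorem lintegral_fin_nat_prod_eq_prod_of_ne_top {n : ℕ} {E : Type*} [MeasurableSpace E]
    {μ : Fin n → Measure E} [∀ i, SigmaFinite (μ i)] {f : Fin n → E → ℝ≥0∞} (hf : ∀ i x, f i x ≠ ∞)
    (hfμ : ∀ i, ∫⁻ x, f i x ∂μ i ≠ ∞) :
    ∫⁻ x, ∏ i, f i (x i) ∂Measure.pi μ = ∏ i, ∫⁻ x, f i x ∂μ i := by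
  induction n with
  | zero => simp
  | succ n ih =>
    have ih' := ih (μ := fun i => μ i.succ) (fun i => hf i.succ) (fun i => hfμ i.succ)
    rw [← ((measurePreserving_piFinSuccAbove μ 0).symm).lintegral_comp_emb
      (MeasurableEquiv.measurableEmbedding _)]
    simp_rw [MeasurableEquiv.piFinSuccAbove_symm_apply, Fin.insertNthEquiv,
      Fin.prod_univ_succ, Fin.insertNth_zero, Equiv.coe_fn_mk, Fin.cons_succ,
      Fin.zero_succAbove, cast_eq, Fin.cons_zero]
    rw [lintegral_prod_mul_of_ne_top (g := fun y : Fin n → E => ∏ i, f i.succ (y i)) (hf 0)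
      (ih' ▸ ENNReal.prod_ne_top fun i _ => hfμ i.succ), ih']

theorem lintegral_fintype_prod_eq_prod_of_ne_top {ι : Type*} [Fintype ι] {E : Type*}
    [MeasurableSpace E] {μ : ι → Measure E} [∀ i, SigmaFinite (μ i)] {f : ι → E → ℝ≥0∞}
    (hf : ∀ i x, f i x ≠ ∞)
    (hfμ : ∀ i, ∫⁻ x, f i x ∂μ i ≠ ∞) :
    ∫⁻ x, ∏ i, f i (x i) ∂Measure.pi μ = ∏ i, ∫⁻ x, f i x ∂μ i := by
  let e := (Fintype.equivFin ι).symm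
  rw [← (measurePreserving_piCongrLeft _ e).lintegral_comp_emb
    (MeasurableEquiv.measurableEmbedding _)]
  simp_rw [← e.prod_comp, MeasurableEquiv.coe_piCongrLeft, Equiv.piCongrLeft_apply_apply]
  exact lintegral_fin_nat_prod_eq_prod_of_ne_top (fun i => hf (e i)) (fun i => hfμ (e i))

theorem pi_withDensity_of_ne_top {ι : Type*} [Fintype ι] {E : Type*} [MeasurableSpace E]
    {ν : ι → Measure E} [∀ i, SigmaFinite (ν i)] {f : ι → E → ℝ≥0∞} (hf : ∀ i x, f i x ≠ ∞)
    [∀ i, IsFiniteMeasure ((ν i).withDensity (f i))] :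
    Measure.pi (fun i => (ν i).withDensity (f i))
      = (Measure.pi ν).withDensity (fun x => ∏ i, f i (x i)) := by
  refine Measure.pi_eq fun s hs => ?_
  have hfin : ∀ i, ∫⁻ x, f i x ∂(ν i).restrict (s i) ≠ ∞ := fun i =>
    withDensity_apply _ (hs i) ▸ measure_ne_top _ _
  rw [withDensity_apply _ (MeasurableSet.univ_pi hs), Measure.restrict_pi_pi,
    lintegral_fintype_prod_eq_prod_of_ne_top hf hfin]
  simp only [withDensity_apply _ (hs _)]

theorem Measure.AbsolutelyContinuous.pi {ι : Type*} [Fintype ι] {E : Type*} [MeasurableSpace E]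
    {μ ν : ι → Measure E} [∀ i, IsFiniteMeasure (μ i)] [∀ i, SigmaFinite (ν i)]
    (h : ∀ i, μ i ≪ ν i) : Measure.pi μ ≪ Measure.pi ν := by
  set d : ι → E → ℝ≥0∞ := fun i x => ((μ i).rnDeriv (ν i) x).toNNReal
  have hd : ∀ i, (ν i).withDensity (d i) = μ i := fun i => by
    conv_rhs => rw [← Measure.withDensity_rnDeriv_eq _ _ (h i)]
    exact withDensity_congr_ae <|
      (Measure.rnDeriv_lt_top _ _).mono fun x hx => ENNReal.coe_toNNReal hx.ne
  have : ∀ i, IsFiniteMeasure ((ν i).withDensity (d i)) := fun i => by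
    rw [hd i]; infer_instance
  rw [show μ = fun i => (ν i).withDensity (d i) from funext fun i => (hd i).symm,
    pi_withDensity_of_ne_top fun _ _ => ENNReal.coe_ne_top]
  exact withDensity_absolutelyContinuous _ _

theorem withDensity_apply_le_mul_of_le_mul {α : Type*} [MeasurableSpace α] {β : Measure α}
    [SFinite β] {f g : α → ℝ≥0∞} (hfg : β.withDensity f ≪ β.withDensity g) {t : ℝ≥0∞}
    (ht : t ≠ ∞) {s : Set α} (hs : MeasurableSet s) (h : ∀ x ∈ s, g x ≠ 0 → f x ≤ t * g x) :
    β.withDensity f s ≤ t * β.withDensity g s := by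
  -- the zero set of a measurable minorant of `g` with the same indefinite integral is null
  obtain ⟨g', hg'm, hg'g, hg'⟩ := exists_measurable_le_withDensity_eq β g
  set N := {x | g' x = 0}
  have hN : MeasurableSet N := hg'm (measurableSet_singleton 0)
  have hgN : β.withDensity g N = 0 := by
    rw [← hg', withDensity_apply _ hN, setLIntegral_congr_fun hN fun x hx => hx, lintegral_zero]
  calc β.withDensity f s ≤ β.withDensity f (s ∩ N) + β.withDensity f (s \ N) :=
        measure_le_inter_add_sdiff _ _ _
    _ = ∫⁻ x in s \ N, f x ∂β := by
        rw [measure_mono_null Set.inter_subset_right (hfg hgN), zero_add,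
          withDensity_apply _ (hs.diff hN)]
    _ ≤ ∫⁻ x in s \ N, t * g x ∂β := setLIntegral_mono' (hs.diff hN) fun x hx =>
        h x hx.1 fun h0 => hx.2 (le_antisymm (h0 ▸ hg'g x) bot_le)
    _ = t * β.withDensity g (s \ N) := by
        rw [lintegral_const_mul' _ _ ht, withDensity_apply _ (hs.diff hN)]
    _ ≤ t * β.withDensity g s := by gcongr; exact Set.sdiff_subset

theorem withDensity_apply_le_mul_add_sdiff {α : Type*} [MeasurableSpace α] {β : Measure α}
    [SFinite β] {f g : α → ℝ≥0∞} (hfg : β.withDensity f ≪ β.withDensity g) {t : ℝ≥0∞}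
    (ht : t ≠ ∞) {a c : Set α} (ha : MeasurableSet a) (h : ∀ x ∈ c, g x ≠ 0 → f x ≤ t * g x) :
    β.withDensity f a ≤ t * β.withDensity g a + β.withDensity f (a \ c) := by
  set V := toMeasurable (β.withDensity f) (a \ c)
  have hV : MeasurableSet V := measurableSet_toMeasurable _ _
  have hc : a \ V ⊆ c := fun x hx => by
    by_contra hxc
    exact hx.2 (subset_toMeasurable _ _ ⟨hx.1, hxc⟩)
  calc β.withDensity f a ≤ β.withDensity f (a ∩ V) + β.withDensity f (a \ V) :=
        measure_le_inter_add_sdiff _ _ _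
    _ ≤ β.withDensity f V + t * β.withDensity g a := by
        gcongr
        · exact Set.inter_subset_right
        · calc β.withDensity f (a \ V) ≤ t * β.withDensity g (a \ V) :=
                withDensity_apply_le_mul_of_le_mul hfg ht (ha.diff hV) fun x hx => h x (hc hx)
            _ ≤ t * β.withDensity g a := by gcongr; exact Set.sdiff_subset
    _ = t * β.withDensity g a + β.withDensity f (a \ c) := by
        rw [measure_toMeasurable, add_comm]

theorem measure_le_mul_add_of_partition {Ω : Type*} [MeasurableSpace Ω] {μ ν : Measure Ω}
    {B : ℕ → Set Ω} (hB : ∀ n, MeasurableSet (B n)) (hBd : Pairwise (Function.onFun Disjoint B))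
    (hμB : μ (⋃ n, B n)ᶜ = 0) {E R : Set Ω} (hE : ∀ n, MeasurableSet (E ∩ B n)) {t : ℝ≥0∞}
    (h : ∀ n, μ (E ∩ B n) ≤ t * ν (E ∩ B n) + μ (R ∩ B n)) : μ E ≤ t * ν E + μ R := by
  have hEd : Pairwise (Function.onFun Disjoint fun n => E ∩ B n) := fun i j hij =>
    (hBd hij).mono Set.inter_subset_right Set.inter_subset_right
  -- `R` need not be measurable: `μ (R ∩ B n) = μ.restrict (B n) R` still adds up over `n`
  calc μ E = ∑' n, μ (E ∩ B n) := by
        rw [← measure_iUnion hEd hE, ← Set.inter_iUnion, measure_inter_conull hμB]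
    _ ≤ ∑' n, (t * ν (E ∩ B n) + μ.restrict (B n) R) := by
        simp only [Measure.restrict_apply' (hB _)]
        exact ENNReal.tsum_le_tsum h
    _ = t * ν (⋃ n, E ∩ B n) + ∑' n, μ.restrict (B n) R := by
        rw [ENNReal.tsum_add, ENNReal.tsum_mul_left, measure_iUnion hEd hE]
    _ ≤ t * ν E + μ R := by
        gcongr
        · exact Set.iUnion_subset fun n => Set.inter_subset_left
        · calc ∑' n, μ.restrict (B n) R ≤ Measure.sum (fun n => μ.restrict (B n)) R :=
                Measure.le_sum_apply _ _
            _ ≤ μ R := by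
                rw [← Measure.restrict_iUnion hBd hB]; exact Measure.restrict_apply_le _ _

end MeasureTheory

theorem ENNReal.prod_ofReal_le_ofReal_mul_prod_ofReal {ι : Type*} [Fintype ι] {a b : ι → ℝ}
    {γ : ℝ} (hγ : 0 < γ) (hab : ∑ i, Real.log (a i / b i) < Real.log γ)
    (hb : ∏ i, ENNReal.ofReal (b i) ≠ 0) :
    ∏ i, ENNReal.ofReal (a i) ≤ ENNReal.ofReal γ * ∏ i, ENNReal.ofReal (b i) := by
  have hb_pos : ∀ i, 0 < b i := fun i => by
    by_contra hi
    exact hb (Finset.prod_eq_zero (Finset.mem_univ i) (ENNReal.ofReal_eq_zero.2 (not_lt.1 hi)))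
  by_cases ha : ∃ i, a i ≤ 0
  · obtain ⟨i, hi⟩ := ha
    rw [Finset.prod_eq_zero (Finset.mem_univ i) (ENNReal.ofReal_eq_zero.2 hi)]
    exact zero_le
  simp only [not_exists, not_le] at ha
  have hprod : ∏ i, a i / b i < γ := by
    rwa [← Real.log_lt_log_iff (Finset.prod_pos fun i _ => div_pos (ha i) (hb_pos i)) hγ,
      Real.log_prod fun i _ => (div_pos (ha i) (hb_pos i)).ne']
  rw [Finset.prod_div_distrib, div_lt_iff₀ (Finset.prod_pos fun i _ => hb_pos i)] at hprod
  rw [← ENNReal.ofReal_prod_of_nonneg fun i _ => (ha i).le,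
    ← ENNReal.ofReal_prod_of_nonneg fun i _ => (hb_pos i).le, ← ENNReal.ofReal_mul hγ.le]
  exact ENNReal.ofReal_le_ofReal hprod.le

theorem MeasurableSpace.comap_subtype_restrict_eq_cylinderEvents {ι : Type*} {X : ι → Type*}
    [∀ i, MeasurableSpace (X i)] (q : ι → Prop) :
    MeasurableSpace.pi.comap (Subtype.restrict q) = cylinderEvents (X := X) {i | q i} := by
  simp_rw [MeasurableSpace.pi, MeasurableSpace.comap_iSup, MeasurableSpace.comap_comp]
  exact iSup_subtype (f := fun i : Subtype q => (inferInstance : MeasurableSpace (X i)).comap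
    fun ω : ∀ i, X i => ω i)

namespace ProbabilityTheory

theorem iIndepFun.measure_subtype_restrict_preimage {ι : Type*} {X : ι → Type*}
    [∀ i, MeasurableSpace (X i)] {μ : Measure (∀ i, X i)} [IsProbabilityMeasure μ]
    (h : iIndepFun (fun i ω => ω i) μ) (p : ι → Prop) [DecidablePred p]
    (Z : Set (∀ i : Subtype p, X i)) :
    μ (Subtype.restrict p ⁻¹' Z) = μ.map (Subtype.restrict p) Z := by
  have hind : IndepFun (Subtype.restrict p) (Subtype.restrict (¬p ·)) μ := by
    rw [IndepFun_iff_Indep, MeasurableSpace.comap_subtype_restrict_eq_cylinderEvents,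
      MeasurableSpace.comap_subtype_restrict_eq_cylinderEvents]
    exact indep_iSup_of_disjoint (fun i => (measurable_pi_apply i).comap_le) h.iIndep
      (Set.disjoint_left.2 fun i hi hi' => hi' hi)
  have hmeas (q : ι → Prop) : Measurable (Subtype.restrict (β := X) q) :=
    measurable_pi_lambda _ fun _ => measurable_pi_apply _
  have hsplit := (indepFun_iff_map_prod_eq_prod_map_map (hmeas p).aemeasurable
    (hmeas _).aemeasurable).1 hind
  have : IsProbabilityMeasure (μ.map (Subtype.restrict (¬p ·))) :=
    Measure.isProbabilityMeasure_map (hmeas _).aemeasurable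
  let e := MeasurableEquiv.piEquivPiSubtypeProd X p
  calc μ (Subtype.restrict p ⁻¹' Z) = μ (e ⁻¹' (Z ×ˢ Set.univ)) := by
        rw [Set.prod_univ]; rfl
    _ = μ.map (Subtype.restrict p) Z := by
        rw [← e.map_apply, show ⇑e = fun ω => (Subtype.restrict p ω, Subtype.restrict (¬p ·) ω)
          from rfl, hsplit, Measure.prod_prod, measure_univ, mul_one]

end ProbabilityTheory

theorem natFilt_eq_comap_restrict (n : ℕ) :
    natFilt n = MeasurableSpace.pi.comap (Finset.range n).restrict :=
  (MeasurableSpace.comap_subtype_restrict_eq_cylinderEvents (· ∈ Finset.range n)).symm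

def natFiltration : Filtration ℕ (inferInstance : MeasurableSpace SeqSp) where
  seq := natFilt
  mono' _ _ h := cylinderEvents_mono (Finset.coe_subset.2 (Finset.range_subset_range.2 h))
  le' _ := cylinderEvents_le_pi

theorem IsStopTime.isStoppingTime {T : SeqSp → ℕ∞} (hT : IsStopTime T) :
    IsStoppingTime natFiltration T :=
  hT

theorem InStoppedSigma.measurableSet_inter_eq {T : SeqSp → ℕ∞} {E : Set SeqSp}
    (hE : InStoppedSigma T E) (hT : IsStopTime T) (n : ℕ) :
    MeasurableSet[natFilt n] (E ∩ {ω | T ω = n}) := by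
  have : E ∩ {ω | T ω = n} = E ∩ {ω | T ω ≤ n} ∩ {ω | T ω = n} := by
    ext ω
    simp +contextual
  rw [this]
  exact (hE n).inter (hT.isStoppingTime.measurableSet_eq n)

theorem IsIIDwithLaw.map_restrict_range {μ : Measure SeqSp} {P : Measure ℝ}
    [IsProbabilityMeasure μ] [IsProbabilityMeasure P] (h : IsIIDwithLaw μ P) (n : ℕ) :
    μ.map (Finset.range n).restrict = Measure.pi fun _ => P := by
  have hμ : μ = Measure.infinitePi fun _ => P := by
    have := (iIndepFun_iff_map_fun_eq_infinitePi_map fun k => measurable_pi_apply k).1 h.1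
    simpa only [h.2, Measure.map_id'] using this
  rw [hμ, Measure.infinitePi_map_restrict]

theorem IsIIDwithLaw.map_restrict_range_eq_withDensity {μ : Measure SeqSp} {P : Measure ℝ}
    [IsProbabilityMeasure μ] [IsProbabilityMeasure P] (h : IsIIDwithLaw μ P) {p : ℝ → ℝ}
    (hp : P = volume.withDensity fun x => ENNReal.ofReal (p x)) (n : ℕ) :
    μ.map (Finset.range n).restrict = (Measure.pi fun _ => volume).withDensity
      fun x => ∏ i, ENNReal.ofReal (p (x i)) := by
  have : IsFiniteMeasure (volume.withDensity fun x => ENNReal.ofReal (p x)) := hp ▸ inferInstance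
  rw [h.map_restrict_range n, hp, pi_withDensity_of_ne_top fun _ _ => ENNReal.ofReal_ne_top]

theorem measure_le_ofReal_mul_add_measure_inter_llrSum_ge {P0 P1 : Measure ℝ}
    [IsProbabilityMeasure P0] [IsProbabilityMeasure P1] {p0 p1 : ℝ → ℝ}
    (hd0 : P0 = volume.withDensity fun x => ENNReal.ofReal (p0 x))
    (hd1 : P1 = volume.withDensity fun x => ENNReal.ofReal (p1 x)) (hac : P0 ≪ P1)
    {μ0 μ1 : Measure SeqSp} [IsProbabilityMeasure μ0] [IsProbabilityMeasure μ1]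
    (hiid0 : IsIIDwithLaw μ0 P0) (hiid1 : IsIIDwithLaw μ1 P1) {γ : ℝ} (hγ : 0 < γ) {n : ℕ}
    {A : Set SeqSp} (hA : MeasurableSet[natFilt n] A) :
    μ0 A ≤ ENNReal.ofReal γ * μ1 A + μ0 (A ∩ {ω | log γ ≤ llrSum p0 p1 n ω}) := by
  have hπ : μ0.map (Finset.range n).restrict ≪ μ1.map (Finset.range n).restrict := by
    rw [hiid0.map_restrict_range, hiid1.map_restrict_range]
    exact Measure.AbsolutelyContinuous.pi fun _ => hac
  have hπ0 := hiid0.map_restrict_range_eq_withDensity hd0 n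
  have hπ1 := hiid1.map_restrict_range_eq_withDensity hd1 n
  obtain ⟨a, ha, rfl⟩ := MeasurableSpace.measurableSet_comap.1 (natFilt_eq_comap_restrict n ▸ hA)
  set r : SeqSp → (Finset.range n → ℝ) := (Finset.range n).restrict
  have hr : Measurable r := Finset.measurable_restrict _
  set c := {x : Finset.range n → ℝ | ∑ i, log (p0 (x i) / p1 (x i)) < log γ}
  have hc : μ0 (r ⁻¹' (a \ c)) = μ0.map r (a \ c) :=
    hiid0.1.measure_subtype_restrict_preimage (· ∈ Finset.range n) (a \ c)
  calc μ0 (r ⁻¹' a) = μ0.map r a := (Measure.map_apply hr ha).symm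
    _ ≤ ENNReal.ofReal γ * μ1.map r a + μ0.map r (a \ c) := by
        rw [hπ0, hπ1] at hπ ⊢
        exact withDensity_apply_le_mul_add_sdiff hπ ENNReal.ofReal_ne_top ha
          fun x hx => ENNReal.prod_ofReal_le_ofReal_mul_prod_ofReal hγ hx
    _ = ENNReal.ofReal γ * μ1 (r ⁻¹' a) + μ0 (r ⁻¹' (a \ c)) := by
        rw [Measure.map_apply hr ha, hc]
    _ ≤ _ := by
        gcongr
        rintro ω ⟨hωa, hωc⟩
        refine ⟨hωa, ?_⟩
        show log γ ≤ ∑ k ∈ Finset.range n, _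
        rw [← Finset.sum_coe_sort]
        exact not_lt.1 hωc

theorem stmt_1_general (P0 P1 : Measure ℝ) [IsProbabilityMeasure P0] [IsProbabilityMeasure P1]
    (p0 p1 : ℝ → ℝ)
    (hd0 : P0 = volume.withDensity (fun x => ENNReal.ofReal (p0 x)))
    (hd1 : P1 = volume.withDensity (fun x => ENNReal.ofReal (p1 x)))
    (hac01 : P0 ≪ P1)
    (μ0 μ1 : Measure SeqSp) [IsProbabilityMeasure μ0] [IsProbabilityMeasure μ1]
    (hiid0 : IsIIDwithLaw μ0 P0) (hiid1 : IsIIDwithLaw μ1 P1)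
    (T : SeqSp → ℕ∞) (hT : IsStopTime T)
    (hTfin0 : μ0 {ω | T ω < ⊤} = 1)
    (E : Set SeqSp) (hE : InStoppedSigma T E) (γ : ℝ) (hγ : 0 < γ) :
    (μ0 E).toReal - γ * (μ1 E).toReal
      ≤ (μ0 {ω | Real.log γ ≤ stoppedLLR p0 p1 T ω}).toReal := by
  have hTn : ∀ n : ℕ, MeasurableSet {ω | T ω = n} := fun n =>
    natFiltration.le n _ (hT.isStoppingTime.measurableSet_eq n)
  have hcover : ⋃ n : ℕ, {ω | T ω = n} = {ω | T ω < ⊤} := by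
    ext ω
    simp only [Set.mem_iUnion, Set.mem_ofPred_eq, lt_top_iff_ne_top, ENat.ne_top_iff_exists,
      eq_comm]
  have key : μ0 E ≤ ENNReal.ofReal γ * μ1 E + μ0 {ω | Real.log γ ≤ stoppedLLR p0 p1 T ω} := by
    refine measure_le_mul_add_of_partition hTn (fun i j hij => Set.disjoint_left.2 fun ω hi hj =>
      hij (by exact_mod_cast hi.symm.trans hj)) ?_
      (fun n => natFiltration.le n _ (hE.measurableSet_inter_eq hT n)) fun n => ?_
    · rw [hcover]
      exact (prob_compl_eq_zero_iff (hcover ▸ MeasurableSet.iUnion hTn)).2 hTfin0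
    · refine (measure_le_ofReal_mul_add_measure_inter_llrSum_ge hd0 hd1 hac01 hiid0 hiid1 hγ
        (hE.measurableSet_inter_eq hT n)).trans (add_le_add le_rfl (measure_mono ?_))
      rintro ω ⟨⟨-, hωT⟩, hω⟩
      exact ⟨by simpa [stoppedLLR, hωT.out] using hω, hωT⟩
  have := ENNReal.toReal_mono (by finiteness) key
  rw [ENNReal.toReal_add (by finiteness) (by finiteness), ENNReal.toReal_mul,
    ENNReal.toReal_ofReal hγ.le] at this
  linarith

/-- change-of-measure inequality for stopping times:
for any `E ∈ 𝓕_T` and `γ > 0`, `P₀(E) - γ P₁(E) ≤ P₀(S_T ≥ log γ)`. -/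
theorem stmt_1 (P0 P1 : Measure ℝ) [IsProbabilityMeasure P0] [IsProbabilityMeasure P1]
    (p0 p1 : ℝ → ℝ)
    (hd0 : P0 = volume.withDensity (fun x => ENNReal.ofReal (p0 x)))
    (hd1 : P1 = volume.withDensity (fun x => ENNReal.ofReal (p1 x)))
    (hac01 : P0 ≪ P1) (hac10 : P1 ≪ P0)
    (μ0 μ1 : Measure SeqSp) [IsProbabilityMeasure μ0] [IsProbabilityMeasure μ1]
    (hiid0 : IsIIDwithLaw μ0 P0) (hiid1 : IsIIDwithLaw μ1 P1)
    (T : SeqSp → ℕ∞) (hT : IsStopTime T)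
    (hTfin0 : μ0 {ω | T ω < ⊤} = 1) (hTfin1 : μ1 {ω | T ω < ⊤} = 1)
    (E : Set SeqSp) (hE : InStoppedSigma T E) (γ : ℝ) (hγ : 0 < γ) :
    (μ0 E).toReal - γ * (μ1 E).toReal
      ≤ (μ0 {ω | Real.log γ ≤ stoppedLLR p0 p1 T ω}).toReal :=
  stmt_1_general P0 P1 p0 p1 hd0 hd1 hac01 μ0 μ1 hiid0 hiid1 T hT hTfin0 E hE γ hγ
end
end

section
/- Let $(\delta_n, T_n)$ be the SPRT with thresholds $\alpha_n = n(D(P_1\|P_0) - c_0/\sqrt{n})$ and $\beta_n = n(D(P_0\|P_1) - c_1/\sqrt{n})$ where $c_1 = -\sqrt{V(P_0\|P_1)}\,\Phi^{-1}(\varepsilon - \eta)$ for some $0 < \eta < \varepsilon < 1$. Assume the third absolute moment of the log-likelihood ratio is finite under $P_0$. Then $P_0(T_n > n) \le \Phi\left(\frac{-c_1}{\sqrt{V(P_0\|P_1)}}\right) + \frac{M}{\sqrt{n}} = \varepsilon - \eta + \frac{M}{\sqrt{n}}$ for a constant $M$ depending only on $P_0, P_1$; in particular $P_0(T_n > n)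 < \varepsilon$ for all sufficiently large $n$. -/
open MeasureTheory ProbabilityTheory Real

noncomputable section

/-!
If the SPRT has not stopped by time `n`, every partial sum `S_k`, `1 ≤ k ≤ n`, stayed inside
`[-αₙ, βₙ]`, so `{T_n > n} ⊆ {max_{k ≤ n} S_k ≤ βₙ}`. Since `βₙ = n D - c₁ √n`, standardizing the
running maximum by `n D` and `√(n V)` turns `βₙ` into the level `-c₁ / √V`, and Rogozin's
Berry–Esseen bound gives `P₀(T_n > n) ≤ Φ(-c₁ / √V) + M / √n = ε - η + M / √n`, which is below
`ε` as soon as `M / √n < η`.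
-/

open Filter Topology

section SPRT

variable {p0 p1 : ℝ → ℝ} {α β : ℝ} {n : ℕ} {ω : SeqSp}

theorem llrSum_le_of_lt_sprtTime (hω : (n : ℕ∞) < sprtTime p0 p1 α β ω) {k : ℕ}
    (hk : k ∈ Finset.Icc 1 n) : llrSum p0 p1 k ω ≤ β := by
  rw [Finset.mem_Icc] at hk
  by_contra hβ
  have hstop : sprtTime p0 p1 α β ω ≤ k := iInf₂_le k ⟨hk.1, fun hmem => hβ hmem.2⟩
  have : n < k := by exact_mod_cast hω.trans_le hstop
  omega

theorem sup'_llrSum_le_of_lt_sprtTime (hn : 1 ≤ n) (hω : (n : ℕ∞) < sprtTime p0 p1 α β ω) :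
    (Finset.Icc 1 n).sup' (Finset.nonempty_Icc.mpr hn) (fun k => llrSum p0 p1 k ω) ≤ β :=
  Finset.sup'_le _ _ fun _ hk => llrSum_le_of_lt_sprtTime hω hk

end SPRT

theorem div_sqrt_mul_le_neg_div_sqrt_iff {n V : ℝ} (hn : 0 < n) (hV : 0 < V) (x D c : ℝ) :
    (x - n * D) / √(n * V) ≤ -c / √V ↔ x ≤ n * (D - c / √n) := by
  have hsn : 0 < √n := Real.sqrt_pos.mpr hn
  have hsV : 0 < √V := Real.sqrt_pos.mpr hV
  have hβ : n * (D - c / √n) = n * D - c * √n := by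
    rw [mul_sub, ← mul_div_assoc, mul_comm n c, mul_div_assoc, Real.div_sqrt]
  rw [Real.sqrt_mul hn.le, div_le_div_iff₀ (mul_pos hsn hsV) hsV, hβ, ← mul_assoc,
    mul_le_mul_iff_of_pos_right hsV, sub_le_iff_le_add, neg_mul, ← sub_eq_neg_add]

theorem eventually_const_div_sqrt_lt (M : ℝ) {η : ℝ} (hη : 0 < η) :
    ∀ᶠ n : ℕ in atTop, M / √(n : ℝ) < η :=
  (tendsto_const_nhds.div_atTop
    (Real.tendsto_sqrt_atTop.comp tendsto_natCast_atTop_atTop)).eventually (gt_mem_nhds hη)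

theorem stmt_14_general
    (p0 p1 : ℝ → ℝ)
    (μ0 : Measure SeqSp) [IsProbabilityMeasure μ0]
    (D01 D10 V01 : ℝ)
    (hV01pos : 0 < V01)
    (ε η : ℝ) (hη : 0 < η)
    (c0 c1 : ℝ) (hc1 : stdGaussCDF (-c1 / Real.sqrt V01) = ε - η)
    (M : ℝ)
    (hRog : ∀ n : ℕ, ∀ hn : 1 ≤ n, ∀ a : ℝ,
      |(μ0 {ω | ((Finset.Icc 1 n).sup' (Finset.nonempty_Icc.mpr hn)
            (fun k => llrSum p0 p1 k ω) - n * D01) / Real.sqrt (n * V01) ≤ a}).toReal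
        - stdGaussCDF a| ≤ M / Real.sqrt n) :
    (∀ n : ℕ, 1 ≤ n →
      (μ0 {ω | (n : ℕ∞) <
          sprtTime p0 p1 (n * (D10 - c0 / Real.sqrt n)) (n * (D01 - c1 / Real.sqrt n)) ω}).toReal
        ≤ (ε - η) + M / Real.sqrt n) ∧
    ∃ N : ℕ, ∀ n : ℕ, N ≤ n →
      (μ0 {ω | (n : ℕ∞) <
          sprtTime p0 p1 (n * (D10 - c0 / Real.sqrt n)) (n * (D01 - c1 / Real.sqrt n)) ω}).toReal
        < ε := by
  have tail_le : ∀ n : ℕ, 1 ≤ n →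
      (μ0 {ω | (n : ℕ∞) <
          sprtTime p0 p1 (n * (D10 - c0 / Real.sqrt n)) (n * (D01 - c1 / Real.sqrt n)) ω}).toReal
        ≤ (ε - η) + M / Real.sqrt n := by
    intro n hn
    have hsub : {ω | (n : ℕ∞) <
          sprtTime p0 p1 (n * (D10 - c0 / Real.sqrt n)) (n * (D01 - c1 / Real.sqrt n)) ω} ⊆
        {ω | ((Finset.Icc 1 n).sup' (Finset.nonempty_Icc.mpr hn)
            (fun k => llrSum p0 p1 k ω) - n * D01) / Real.sqrt (n * V01) ≤ -c1 / √V01} :=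
      fun ω hω => (div_sqrt_mul_le_neg_div_sqrt_iff (by exact_mod_cast hn) hV01pos _ _ _).mpr
        (sup'_llrSum_le_of_lt_sprtTime hn hω)
    have hBE := (abs_le.mp (hRog n hn (-c1 / √V01))).2
    have hmono := ENNReal.toReal_mono (measure_ne_top μ0 _) (measure_mono (μ := μ0) hsub)
    linarith
  refine ⟨tail_le, ?_⟩
  obtain ⟨N, hN⟩ :=
    eventually_atTop.mp ((eventually_const_div_sqrt_lt M hη).and (eventually_ge_atTop 1))
  exact ⟨N, fun n hn => by linarith [tail_le n (hN n hn).2, (hN n hn).1]⟩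

/-- for the SPRT with thresholds
`αₙ = n(D(P1‖P0) - c0/√n)`, `βₙ = n(D(P0‖P1) - c1/√n)`, where
`c1 = -√V(P0‖P1) Φ⁻¹(ε-η)` (expressed via `Φ(-c1/√V) = ε - η`), the probability of
stopping after time `n` under `P₀` is at most `Φ(-c1/√V) + M/√n = ε - η + M/√n`, and
in particular it is `< ε` for all sufficiently large `n`.  The Berry–Esseen bound of
Rogozin for the running maximum is taken as the hypothesis `hRog`. -/
theorem stmt_14 (P0 P1 : Measure ℝ) [IsProbabilityMeasure P0] [IsProbabilityMeasure P1]
    (p0 p1 : ℝ → ℝ)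
    (hd0 : P0 = volume.withDensity (fun x => ENNReal.ofReal (p0 x)))
    (hd1 : P1 = volume.withDensity (fun x => ENNReal.ofReal (p1 x)))
    (μ0 : Measure SeqSp) [IsProbabilityMeasure μ0] (hiid0 : IsIIDwithLaw μ0 P0)
    (D01 D10 V01 : ℝ)
    (hD01 : ∫ x, Real.log (p0 x / p1 x) ∂P0 = D01) (hD01pos : 0 < D01)
    (hD10 : ∫ x, Real.log (p1 x / p0 x) ∂P1 = D10) (hD10pos : 0 < D10)
    (hV01 : ∫ x, (Real.log (p0 x / p1 x) - D01) ^ 2 ∂P0 = V01) (hV01pos : 0 < V01)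
    (hmom3 : Integrable (fun x => |Real.log (p0 x / p1 x)| ^ 3) P0)
    (ε η : ℝ) (hη : 0 < η) (hηε : η < ε) (hε : ε < 1)
    (c0 c1 : ℝ) (hc1 : stdGaussCDF (-c1 / Real.sqrt V01) = ε - η)
    (M : ℝ) (hM : 0 ≤ M)
    (hRog : ∀ n : ℕ, ∀ hn : 1 ≤ n, ∀ a : ℝ,
      |(μ0 {ω | ((Finset.Icc 1 n).sup' (Finset.nonempty_Icc.mpr hn)
            (fun k => llrSum p0 p1 k ω) - n * D01) / Real.sqrt (n * V01) ≤ a}).toReal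
        - stdGaussCDF a| ≤ M / Real.sqrt n) :
    (∀ n : ℕ, 1 ≤ n →
      (μ0 {ω | (n : ℕ∞) <
          sprtTime p0 p1 (n * (D10 - c0 / Real.sqrt n)) (n * (D01 - c1 / Real.sqrt n)) ω}).toReal
        ≤ (ε - η) + M / Real.sqrt n) ∧
    ∃ N : ℕ, ∀ n : ℕ, N ≤ n →
      (μ0 {ω | (n : ℕ∞) <
          sprtTime p0 p1 (n * (D10 - c0 / Real.sqrt n)) (n * (D01 - c1 / Real.sqrt n)) ω}).toReal
        < ε :=
  stmt_14_general p0 p1 μ0 D01 D10 V01 hV01pos ε η hη c0 c1 hc1 M hRog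
end
end
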